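/- Let A be a local integral domain with quotient field F and maximal ideal m such that A is not a valuation domain, A = (m :_F m), and A = R ∩ V, where R is an intersection of valuation rings of F dominating A, V is a valuation ring of F dominating A, and R is not contained in V. Then there exists a Zariski closed and disconnected subset Z of Val_F(A) such that A is the intersection of the rings in Z. -/

import Mathlib

namespace Paper

open TopologicalSpace

variable {F : Type*} [Field F]

/-- `B` dominates `A` along the inclusion `h : A ≤ B`: nonunits of `A` remain
nonunits of `B` (equivalently, the maximal ideal of `B` contracts to that of `A`
when both are local). -/
def DominatesLe (A B : Subring F) (h : A ≤ B) : Prop :=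
  ∀ a : A, IsUnit (Subring.inclusion h a) → IsUnit a

/-- `B` dominates `A`. -/
def Dominates (A B : Subring F) : Prop :=
  ∃ h : A ≤ B, DominatesLe A B h

/-- `B` is residually algebraic over `A` (along `h : A ≤ B`, with `A`, `B` local):
every element of `B` satisfies, modulo the maximal ideal of `B`, a polynomial with
coefficients in `A` whose residue is nonzero (i.e. some coefficient is a unit of `A`). -/
def ResiduallyAlgebraic (A B : Subring F) (h : A ≤ B) : Prop :=
  ∀ b : B, ∃ f : Polynomial A, (∃ i, IsUnit (f.coeff i)) ∧
    ¬ IsUnit (Polynomial.eval b (f.map (Subring.inclusion h)))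

/-- `A` is integrally closed in `F`. -/
def IntegrallyClosedIn (A : Subring F) : Prop :=
  ∀ x : F, ∀ f : Polynomial A, f.Monic → Polynomial.eval x (f.map A.subtype) = 0 → x ∈ A

/-- The Zariski topology on the valuation subrings of `F`, with subbasic open sets
`{V : x ∈ V}` for `x ∈ F`. -/
def zariskiTopology (F : Type*) [Field F] : TopologicalSpace (ValuationSubring F) :=
  generateFrom {U | ∃ x : F, U = {V : ValuationSubring F | x ∈ V}}

/-- The patch topology on the valuation subrings of `F`, with subbasic open sets
`{V : x ∈ V}` and `{V : y ∉ V}` for `x, y ∈ F`. -/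
def patchTopology (F : Type*) [Field F] : TopologicalSpace (ValuationSubring F) :=
  generateFrom {U | (∃ x : F, U = {V : ValuationSubring F | x ∈ V}) ∨
    (∃ y : F, U = {V : ValuationSubring F | y ∉ V})}

/-- The inverse topology associated to a topology: the topology whose basic closed
sets are the quasicompact open sets of the original topology. -/
def inverseOf {X : Type*} (t : TopologicalSpace X) : TopologicalSpace X :=
  generateFrom {U | ∃ C : Set X, @IsOpen X t C ∧ @IsCompact X t C ∧ U = Cᶜ}

/-- `Z` is a closed subset of `S` (in the relative topology induced by `t`). -/
def RelClosedIn {X : Type*} (t : TopologicalSpace X) (Z S : Set X) : Prop :=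
  ∃ C : Set X, @IsClosed X t C ∧ Z = C ∩ S

/-- The Zariski--Riemann space of a subring `A` of `F`: all valuation rings of `F`
containing `A`. -/
def Zar (A : Subring F) : Set (ValuationSubring F) :=
  {V | A ≤ V.toSubring}

/-- `Val(A)`: the valuation rings of `F` dominating `A`. -/
def Val (A : Subring F) : Set (ValuationSubring F) :=
  {V | Dominates A V.toSubring}

/-- `A(Z)`: the intersection of the valuation rings in `Z`, as a subring of `F`. -/
def interZ (Z : Set (ValuationSubring F)) : Subring F :=
  ⨅ V ∈ Z, (V : ValuationSubring F).toSubring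

/-- `R` is a two-dimensional regular local ring: Noetherian local of Krull dimension 2
whose maximal ideal (= the nonunits) is generated by two elements. -/
def IsTwoDimRegularLocal (R : Type*) [CommRing R] : Prop :=
  IsNoetherianRing R ∧ IsLocalRing R ∧ ringKrullDim R = 2 ∧
    ∃ x y : R, ∀ z : R, ¬ IsUnit z ↔ z ∈ Ideal.span {x, y}

/-- `R` is a regular local ring: Noetherian local whose maximal ideal (= the nonunits)
is generated by (Krull dimension of `R`)-many elements. -/
def IsRegularLocal (R : Type*) [CommRing R] : Prop :=
  IsNoetherianRing R ∧ IsLocalRing R ∧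
    ∃ s : Finset R, (∀ z : R, ¬ IsUnit z ↔ z ∈ Ideal.span (s : Set R)) ∧
      (s.card : WithBot (WithTop ℕ)) = ringKrullDim R

/-- `p` is a height-one prime ideal: a nonzero prime all of whose proper prime
subideals are zero. -/
def HeightOnePrime {R : Type*} [CommRing R] (p : Ideal R) : Prop :=
  p.IsPrime ∧ p ≠ ⊥ ∧ ∀ q : Ideal R, q.IsPrime → q < p → q = ⊥

/-- The localization of a subring `R` of `F` at an ideal `p`, as a subset of `F`:
the ratios `a / b` with `a, b ∈ R` and `b ∉ p`. -/
def locSet (R : Subring F) (p : Ideal R) : Set F :=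
  {x : F | ∃ a b : R, b ∉ p ∧ x * (b : F) = (a : F)}

/-- `V` (a subring of `F`) is an essential valuation ring of `D`: a localization of
`D` at a height-one prime ideal. -/
def IsEssentialValRingOf (D V : Subring F) : Prop :=
  ∃ p : Ideal D, HeightOnePrime p ∧ (V : Set F) = locSet D p

/-- `V` (a subring of `F`) is a divisorial valuation ring of `D`: a discrete valuation
overring of `D` dominating `D` whose residue field is transcendental over the residue
field of `D`. -/
def IsDivisorialValRingOf (D V : Subring F) : Prop :=
  (∃ W : ValuationSubring F, W.toSubring = V) ∧ IsDiscreteValuationRing V ∧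
    ∃ h : D ≤ V, DominatesLe D V h ∧ ¬ ResiduallyAlgebraic D V h

/-- `S` is a local quadratic transform of the two-dimensional regular local ring `R`
(both subrings of `F`): for generators `x, y` of the maximal ideal of `R`,
`S = R[x/y]_P` for a prime `P` of `R[x/y]` containing the maximal ideal of `R`. -/
def IsLocalQuadraticTransform (R S : Subring F) : Prop :=
  ∃ x y : R, (∀ z : R, ¬ IsUnit z ↔ z ∈ Ideal.span {x, y}) ∧
    ∃ hle : R ≤ Subring.closure ((R : Set F) ∪ {(x : F) / (y : F)}),
      ∃ P : Ideal (Subring.closure ((R : Set F) ∪ {(x : F) / (y : F)})),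
        P.IsPrime ∧ (∀ z : R, ¬ IsUnit z → Subring.inclusion hle z ∈ P) ∧
          (S : Set F) = locSet (Subring.closure ((R : Set F) ∪ {(x : F) / (y : F)})) P

/-- The quadratic tree of `D`: all two-dimensional regular local overrings of `D`. -/
def QTree (D : Subring F) : Set (Subring F) :=
  {R | D ≤ R ∧ IsTwoDimRegularLocal R}

/-- `QLevel D i`: the two-dimensional regular local rings obtained from `D` by `i`
iterated local quadratic transforms. -/
def QLevel (D : Subring F) : ℕ → Set (Subring F)
  | 0 => {D}
  | (n + 1) => {S | ∃ R ∈ QLevel D n, IsLocalQuadraticTransform R S ∧ IsTwoDimRegularLocal S}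

/-- `Q_{≤ n}(D)`. -/
def QLevelLE (D : Subring F) (n : ℕ) : Set (Subring F) :=
  ⋃ i ∈ Set.Iic n, QLevel D i

/-- The projective model of `D` determined by nonzero elements `x 0, …, x (n-1)` of `D`:
the local rings `D[x 0 / x i, …, x (n-1) / x i]_P`. -/
def IsProjectiveModelOf (D : Subring F) (X : Set (Subring F)) : Prop :=
  ∃ (n : ℕ) (x : Fin n → F), 0 < n ∧ (∀ i, x i ∈ D) ∧ (∀ i, x i ≠ 0) ∧
    X = {S : Subring F | ∃ (i : Fin n)
          (P : Ideal (Subring.closure ((D : Set F) ∪ Set.range fun j => x j / x i))),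
        P.IsPrime ∧
          (S : Set F) = locSet (Subring.closure ((D : Set F) ∪ Set.range fun j => x j / x i)) P}

/-- The Zariski topology on the set of subrings of `F` (used for projective models),
with subbasic open sets `{S : x ∈ S}`. -/
def zariskiSubringTopology (F : Type*) [Field F] : TopologicalSpace (Subring F) :=
  generateFrom {U | ∃ x : F, U = {S : Subring F | x ∈ S}}


/-- The associated graded ring `gr_m(R) = R[mt]/(m·R[mt])` of a local ring `R`. -/
noncomputable abbrev grm (R : Type*) [CommRing R] [IsLocalRing R] : Type _ :=
  (reesAlgebra (IsLocalRing.maximalIdeal R)) ⧸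
    (Ideal.map (algebraMap R (reesAlgebra (IsLocalRing.maximalIdeal R)))
      (IsLocalRing.maximalIdeal R))

/-- The initial form of an element `f` with `f ∈ m^r` (for `r = ord f` this is the
initial form of `f`; for `f ∈ m^{r+1}` it is zero): the image of `f·t^r ∈ R[mt]`
in the associated graded ring. -/
noncomputable def initialForm (R : Type*) [CommRing R] [IsLocalRing R]
    (f : R) (r : ℕ) (hf : f ∈ (IsLocalRing.maximalIdeal R) ^ r) : grm R :=
  Ideal.Quotient.mk
    (Ideal.map (algebraMap R (reesAlgebra (IsLocalRing.maximalIdeal R)))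
      (IsLocalRing.maximalIdeal R))
    ⟨Polynomial.monomial r f, by
      rw [mem_reesAlgebra_iff]
      intro i
      rw [Polynomial.coeff_monomial]
      by_cases h : i = r
      · subst h; simpa using hf
      · rw [if_neg (Ne.symm h)]; exact Ideal.zero_mem _⟩

/-- `x ∈ gr_m(R)` is homogeneous of degree `d`. -/
def IsHomogOfDegree (R : Type*) [CommRing R] [IsLocalRing R] (x : grm R) (d : ℕ) : Prop :=
  ∃ (c : R) (hc : c ∈ (IsLocalRing.maximalIdeal R) ^ d), x = initialForm R c d hc

/-- An ideal of `gr_m(R)` is homogeneous if it is generated by homogeneous elements. -/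
def IsHomogeneousIdeal (R : Type*) [CommRing R] [IsLocalRing R] (I : Ideal (grm R)) : Prop :=
  ∃ S : Set (grm R), (∀ x ∈ S, ∃ d, IsHomogOfDegree R x d) ∧ I = Ideal.span S


/-- Let `A` be a local domain with quotient field `F` and maximal ideal `m`
such that `A` is not a valuation domain, `A = (m :_F m)`, and `A = R ∩ V` where `R` is an
intersection of valuation rings dominating `A`, `V` is a valuation ring dominating `A`,
and `R ⊈ V`. Then there is a Zariski closed and disconnected subset `Z` of `Val_F(A)` with
`A = A(Z)`. -/
theorem statement_16 {F : Type*} [Field F] (A : Subring F) [IsLocalRing A]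
    (hfrac : ∀ t : F, ∃ a b : A, (b : F) ≠ 0 ∧ t * (b : F) = (a : F))
    (hnotval : ¬ ∃ V : ValuationSubring F, V.toSubring = A)
    (hmm : ∀ x : F,
      (∀ a : A, ¬ IsUnit a → ∃ h : x * (a : F) ∈ A, ¬ IsUnit (⟨x * (a : F), h⟩ : A)) ↔
        x ∈ A)
    (S : Set (ValuationSubring F)) (hSne : S.Nonempty) (hSsub : S ⊆ Val A)
    (V : ValuationSubring F) (hV : V ∈ Val A)
    (hRV : ¬ interZ S ≤ V.toSubring)
    (hA : A = interZ S ⊓ V.toSubring) :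
    ∃ Z : Set (ValuationSubring F), Z.Nonempty ∧ Z ⊆ Val A ∧
      RelClosedIn (zariskiTopology F) Z (Val A) ∧
      ¬ @IsPreconnected _ (zariskiTopology F) Z ∧ A = interZ Z := by
  classical
  obtain ⟨r, hrS, hrV⟩ := SetLike.not_le_iff_exists.mp hRV
  obtain ⟨hleV, hdomV⟩ := hV
  have hrmem : ∀ W ∈ S, r ∈ W.toSubring := fun W hW =>
    (iInf₂_le W hW : interZ S ≤ W.toSubring) hrS
  have hrA : r ∉ A := fun h => hrV (hleV h)
  have hr0 : r ≠ 0 := fun h => hrV (h ▸ zero_mem _)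
  obtain ⟨W₀, hW₀⟩ := hSne
  -- Step 1: find a nonunit `a` of `A` with `r * a ∉ V`.
  have key : ∃ a : A, ¬ IsUnit a ∧ r * (a : F) ∉ V.toSubring := by
    by_contra hc
    push_neg at hc
    apply hrA
    rw [← hmm r]
    intro a ha
    have h1 : r * (a : F) ∈ V.toSubring := hc a ha
    have h2 : r * (a : F) ∈ interZ S := by
      refine Subring.mem_iInf.mpr fun W => Subring.mem_iInf.mpr fun hW => ?_
      exact mul_mem (hrmem W hW) ((hSsub hW).choose a.2)
    have hmemA : r * (a : F) ∈ A := hA.symm.le (Subring.mem_inf.mpr ⟨h2, h1⟩)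
    refine ⟨hmemA, fun hu => ?_⟩
    obtain ⟨b, hb⟩ := isUnit_iff_exists_inv.mp hu
    have hb' : (r * (a : F)) * (b : F) = 1 := by simpa using congrArg Subtype.val hb
    have hrq : r * ((a * b : A) : F) = 1 := by
      push_cast
      rw [← mul_assoc]; exact hb'
    by_cases hqu : IsUnit (a * b : A)
    · obtain ⟨c, hc'⟩ := isUnit_iff_exists_inv.mp hqu
      have hc'' : (((a * b : A)) : F) * (c : F) = 1 := by
        exact_mod_cast congrArg Subtype.val hc'
      have hrc : r = (c : F) := by
        rw [← mul_one r, ← hc'', ← mul_assoc, hrq, one_mul]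
      exact hrA (hrc ▸ c.2)
    · obtain ⟨hleW, hdomW⟩ := hSsub hW₀
      refine hqu (hdomW (a * b) (isUnit_iff_exists_inv.mpr
        ⟨⟨r, hrmem W₀ hW₀⟩, Subtype.ext ?_⟩))
      show (((a * b : A) : F)) * r = 1
      rw [mul_comm]; exact hrq
  obtain ⟨a, haU, hsV⟩ := key
  set s : F := r * (a : F) with hsdef
  have hs0 : s ≠ 0 := fun h => hsV (h ▸ zero_mem _)
  have hsV' : s ∉ V := hsV
  have hsiV : s⁻¹ ∈ V := (V.mem_or_inv_mem s).resolve_left hsV'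
  -- `s` belongs to every `W ∈ S`, and `s⁻¹` does not.
  have hsW : ∀ W ∈ S, s ∈ W := fun W hW =>
    mul_mem (hrmem W hW) ((hSsub hW).choose a.2)
  have hsiW : ∀ W ∈ S, s⁻¹ ∉ W := by
    intro W hW h
    obtain ⟨hleW, hdomW⟩ := hSsub hW
    refine haU (hdomW a (isUnit_iff_exists_inv.mpr
      ⟨⟨r * s⁻¹, mul_mem (hrmem W hW) h⟩, Subtype.ext ?_⟩))
    show (a : F) * (r * s⁻¹) = 1
    rw [← mul_assoc, mul_comm (a : F) r, ← hsdef, mul_inv_cancel₀ hs0]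
  -- The disconnected closed set.
  refine ⟨({W : ValuationSubring F | s ∈ W}ᶜ ∪ {W : ValuationSubring F | s⁻¹ ∈ W}ᶜ) ∩ Val A,
    ⟨V, Or.inl hsV', hleV, hdomV⟩, Set.inter_subset_right, ?_, ?_, ?_⟩
  · -- relatively closed
    refine ⟨_, ?_, rfl⟩
    letI : TopologicalSpace (ValuationSubring F) := zariskiTopology F
    exact IsClosed.union
      (IsOpen.isClosed_compl (TopologicalSpace.GenerateOpen.basic _ ⟨s, rfl⟩))
      (IsOpen.isClosed_compl (TopologicalSpace.GenerateOpen.basic _ ⟨s⁻¹, rfl⟩))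
  · -- not preconnected
    intro hpc
    have hcov : (({W : ValuationSubring F | s ∈ W}ᶜ ∪ {W : ValuationSubring F | s⁻¹ ∈ W}ᶜ)
        ∩ Val A) ⊆ {W : ValuationSubring F | s ∈ W} ∪ {W : ValuationSubring F | s⁻¹ ∈ W} :=
      fun W _ => W.mem_or_inv_mem s
    have hne1 : ((({W : ValuationSubring F | s ∈ W}ᶜ ∪ {W : ValuationSubring F | s⁻¹ ∈ W}ᶜ)
        ∩ Val A) ∩ {W : ValuationSubring F | s ∈ W}).Nonempty :=
      ⟨W₀, ⟨Or.inr (hsiW W₀ hW₀), hSsub hW₀⟩, hsW W₀ hW₀⟩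
    have hne2 : ((({W : ValuationSubring F | s ∈ W}ᶜ ∪ {W : ValuationSubring F | s⁻¹ ∈ W}ᶜ)
        ∩ Val A) ∩ {W : ValuationSubring F | s⁻¹ ∈ W}).Nonempty :=
      ⟨V, ⟨Or.inl hsV', hleV, hdomV⟩, hsiV⟩
    obtain ⟨W, ⟨hWZ, _⟩, h1, h2⟩ := hpc _ _
      (TopologicalSpace.GenerateOpen.basic _ ⟨s, rfl⟩)
      (TopologicalSpace.GenerateOpen.basic _ ⟨s⁻¹, rfl⟩) hcov hne1 hne2
    rcases hWZ with h | h
    · exact h h1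
    · exact h h2
  · -- A = intersection
    refine le_antisymm (le_iInf₂ fun W hW => hW.2.choose) (le_trans (le_inf ?_ ?_) hA.ge)
    · exact le_iInf₂ fun W hW => iInf₂_le W ⟨Or.inr (hsiW W hW), hSsub hW⟩
    · exact iInf₂_le V ⟨Or.inl hsV', hleV, hdomV⟩

end Paper
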